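/- Let D be a simple digraph on n ≥ 2 vertices with outdegree sequence d_1^+ ≥ d_2^+ ≥ … ≥ d_n^+. Define φ_1 = 2 d_1^+ and, for 2 ≤ l ≤ n, φ_l = (d_1^+ + 2 d_l^+ − 1 + sqrt((2 d_l^+ − d_1^+ + 1)^2 + 8 Σ_{i=1}^{l−1}(d_i^+ − d_l^+)))/2. Let φ_s = min_{1 ≤ l ≤ n} φ_l for some s ∈ {1,…,n}. Then q(D) ≤ φ_s. Furthermore, if D is strongly connected, then q(D) = φ_s if and only if either all outdegrees of D are equal (D is regular), or there exists an integer t with 2 ≤ t ≤ s such that d_1^+ = … = d_{t−1}^+ > d_t^+ = … = d_n^+ and each of the t−1 vertices of largest outdegree has indegree n−1. -/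

import Mathlib

open Matrix

namespace SignlessDigraph

variable {n : ℕ}

/-- Real adjacency matrix of a (multi)digraph on `Fin n`, given by arc multiplicities. -/
def adjMat (W : Fin n → Fin n → ℕ) : Matrix (Fin n) (Fin n) ℝ :=
  fun i j => (W i j : ℝ)

/-- Outdegree of a vertex. -/
def outdeg (W : Fin n → Fin n → ℕ) (i : Fin n) : ℕ := ∑ j, W i j

/-- Indegree of a vertex. -/
def indeg (W : Fin n → Fin n → ℕ) (i : Fin n) : ℕ := ∑ j, W j i

/-- The signless Laplacian matrix `Q(D) = diag(outdegrees) + A(D)`. -/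
noncomputable def Qmat (W : Fin n → Fin n → ℕ) : Matrix (Fin n) (Fin n) ℝ :=
  Matrix.diagonal (fun i => (outdeg W i : ℝ)) + adjMat W

/-- Spectral radius of a real matrix: the maximum modulus of its (complex) eigenvalues. -/
noncomputable def radius (M : Matrix (Fin n) (Fin n) ℝ) : ℝ :=
  sSup {r : ℝ | ∃ μ ∈ spectrum ℂ (M.map ((↑) : ℝ → ℂ)), r = ‖μ‖}

/-- The signless Laplacian spectral radius `q(D)`. -/
noncomputable def q (W : Fin n → Fin n → ℕ) : ℝ := radius (Qmat W)

/-- The (adjacency) spectral radius `ρ(D)`. -/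
noncomputable def rho (W : Fin n → Fin n → ℕ) : ℝ := radius (adjMat W)

/-- A digraph is simple: no loops and no multiple arcs. -/
def Simple (W : Fin n → Fin n → ℕ) : Prop :=
  (∀ i, W i i = 0) ∧ ∀ i j, W i j ≤ 1

/-- Strong connectivity: every vertex is reachable from every vertex by a directed path. -/
def StronglyConnected (W : Fin n → Fin n → ℕ) : Prop :=
  ∀ i j : Fin n, Relation.ReflTransGen (fun a b => W a b ≠ 0) i j

/-- Isomorphism of digraphs on `Fin n`. -/
def Iso (W W' : Fin n → Fin n → ℕ) : Prop :=
  ∃ e : Fin n ≃ Fin n, ∀ i j, W (e i) (e j) = W' i j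

/-- The clique number: maximum size of a set of vertices with all arcs in both directions. -/
noncomputable def cliqueNum (W : Fin n → Fin n → ℕ) : ℕ :=
  sSup {d : ℕ | ∃ s : Finset (Fin n), s.card = d ∧ ∀ i ∈ s, ∀ j ∈ s, i ≠ j → W i j ≠ 0}

/-- `W` has a directed cycle of length `c`. -/
def HasCycleLen (W : Fin n → Fin n → ℕ) (c : ℕ) : Prop :=
  ∃ (hc : 2 ≤ c) (p : Fin c → Fin n), Function.Injective p ∧
    ∀ i : Fin c, W (p i) (p ⟨((i : ℕ) + 1) % c, Nat.mod_lt _ (by omega)⟩) ≠ 0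

/-- The girth: length of a shortest directed cycle. -/
noncomputable def girth (W : Fin n → Fin n → ℕ) : ℕ := sInf {c | HasCycleLen W c}

/-- The complete digraph `K_n^↔`. -/
def Kcomp (n : ℕ) : Fin n → Fin n → ℕ := fun i j => if i = j then 0 else 1

/-- The directed cycle `C_n^→`, with arcs `i → i+1 (mod n)`. -/
def cyc (n : ℕ) : Fin n → Fin n → ℕ := fun i j => if (j : ℕ) = ((i : ℕ) + 1) % n then 1 else 0

/-- The digraph `B_{n,d}` (for `2 ≤ d ≤ n-1`): a complete digraph on the vertices
`0, …, d-1` together with a directed path `0 → d → d+1 → ⋯ → n-1 → 1`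
(the path `u_1 u_2 ⋯ u_{n-d+2}` with `u_1 = 0`, `u_{n-d+2} = 1`,
and internal vertices `d, …, n-1`). -/
def B (n d : ℕ) : Fin n → Fin n → ℕ := fun i j =>
  if i ≠ j ∧ (i : ℕ) < d ∧ (j : ℕ) < d then 1
  else if (i : ℕ) = 0 ∧ (j : ℕ) = d then 1
  else if d ≤ (i : ℕ) ∧ (j : ℕ) = (i : ℕ) + 1 then 1
  else if (i : ℕ) = n - 1 ∧ (j : ℕ) = 1 then 1
  else 0

/-- `B'_{n,d} = B_{n,d} − (u_{n-d+1}, u_{n-d+2}) + (u_{n-d+1}, u_1)`, i.e. the arc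
`n-1 → 1` is replaced by the arc `n-1 → 0`. -/
def B' (n d : ℕ) : Fin n → Fin n → ℕ := fun i j =>
  if (i : ℕ) = n - 1 ∧ (j : ℕ) = 1 then 0
  else if (i : ℕ) = n - 1 ∧ (j : ℕ) = 0 then 1
  else B n d i j

/-- The digraph `C_{n,g}` (for `2 ≤ g ≤ n-1`): vertices `u_1, …, u_n` are `0, …, n-1`,
with arcs `i → i+1` for `0 ≤ i ≤ n-2` together with the arcs `g-1 → 0` and `n-1 → 0`. -/
def Cng (n g : ℕ) : Fin n → Fin n → ℕ := fun i j =>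
  if (j : ℕ) = (i : ℕ) + 1 then 1
  else if ((i : ℕ) = g - 1 ∨ (i : ℕ) = n - 1) ∧ (j : ℕ) = 0 then 1
  else 0

/-- `C'_{n,g} = C_{n,g} − (u_n, u_1) + (u_n, u_g)`, i.e. the arc `n-1 → 0` is replaced by
the arc `n-1 → g-1`. -/
def Cng' (n g : ℕ) : Fin n → Fin n → ℕ := fun i j =>
  if (i : ℕ) = n - 1 ∧ (j : ℕ) = 0 then 0
  else if (i : ℕ) = n - 1 ∧ (j : ℕ) = g - 1 then 1
  else Cng n g i j

/-- The θ-digraph `θ(a,b,c)` realized on `Fin n` (intended for `n = a + b + c + 2`):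
vertex `0` is the common initial vertex of the paths `P_{a+2}`, `P_{b+2}` and terminal
vertex of `P_{c+2}`; vertex `1` is the common terminal vertex of `P_{a+2}`, `P_{b+2}`
and initial vertex of `P_{c+2}`; the internal vertices of the three paths are
`2, …, a+1`, `a+2, …, a+b+1` and `a+b+2, …, a+b+c+1` respectively. -/
def theta (n a b c : ℕ) : Fin n → Fin n → ℕ := fun i j =>
  if ((a = 0 ∧ (i : ℕ) = 0 ∧ (j : ℕ) = 1) ∨
      (a ≠ 0 ∧ (((i : ℕ) = 0 ∧ (j : ℕ) = 2) ∨
        (2 ≤ (i : ℕ) ∧ (i : ℕ) ≤ a ∧ (j : ℕ) = (i : ℕ) + 1) ∨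
        ((i : ℕ) = a + 1 ∧ (j : ℕ) = 1))) ∨
      (b = 0 ∧ (i : ℕ) = 0 ∧ (j : ℕ) = 1) ∨
      (b ≠ 0 ∧ (((i : ℕ) = 0 ∧ (j : ℕ) = a + 2) ∨
        (a + 2 ≤ (i : ℕ) ∧ (i : ℕ) ≤ a + b ∧ (j : ℕ) = (i : ℕ) + 1) ∨
        ((i : ℕ) = a + b + 1 ∧ (j : ℕ) = 1))) ∨
      (c = 0 ∧ (i : ℕ) = 1 ∧ (j : ℕ) = 0) ∨
      (c ≠ 0 ∧ (((i : ℕ) = 1 ∧ (j : ℕ) = a + b + 2) ∨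
        (a + b + 2 ≤ (i : ℕ) ∧ (i : ℕ) ≤ a + b + c ∧ (j : ℕ) = (i : ℕ) + 1) ∨
        ((i : ℕ) = a + b + c + 1 ∧ (j : ℕ) = 0))))
  then 1 else 0

/-- The digraph `K→(n,k,m)`: the vertex set is partitioned into
`V₁ = {0,…,m-1}`, `S = {m,…,m+k-1}`, `V₂ = {m+k,…,n-1}`; it is the complete digraph
with all arcs from `V₂` to `V₁` removed. -/
def Kdir (n k m : ℕ) : Fin n → Fin n → ℕ := fun i j =>
  if i = j then 0
  else if m + k ≤ (i : ℕ) ∧ (j : ℕ) < m then 0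
  else 1

/-- The digraph `D_{uv}` obtained from `D` by deleting the arc `(u,v)`, identifying `u`
with `v` (the merged vertex is `v`; the vertex `u` becomes isolated) and deleting
multiple arcs (and loops). -/
def contract (W : Fin n → Fin n → ℕ) (u v : Fin n) : Fin n → Fin n → ℕ :=
  fun i j =>
    if i = u ∨ j = u ∨ i = j then 0
    else if i = v then min 1 (W v j + W u j)
    else if j = v then min 1 (W i v + W i u)
    else min 1 (W i j)

/-- The digraph `D^w` obtained from `D` by subdividing the arc `(u,v)` with a new
vertex `w` (realized as the last vertex of `Fin (n+1)`). -/
def subdivide (W : Fin n → Fin n → ℕ) (u v : Fin n) : Fin (n + 1) → Fin (n + 1) → ℕ :=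
  fun i j =>
    if hi : (i : ℕ) < n then
      if hj : (j : ℕ) < n then
        if (⟨(i : ℕ), hi⟩ : Fin n) = u ∧ (⟨(j : ℕ), hj⟩ : Fin n) = v then 0
        else W ⟨(i : ℕ), hi⟩ ⟨(j : ℕ), hj⟩
      else if (⟨(i : ℕ), hi⟩ : Fin n) = u then 1 else 0
    else
      if hj : (j : ℕ) < n then (if (⟨(j : ℕ), hj⟩ : Fin n) = v then 1 else 0)
      else 0

end SignlessDigraph

/-! For a nonnegative matrix `Q` and a positive vector `x` with `Q x ≤ σ x`, every eigenvalue of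
`Q` has modulus at most `σ` (Collatz–Wielandt); if moreover `Q` is irreducible and `σ` is its
spectral radius, then `Q x = σ x`. For `φ_L` take `x_j = 1 + c (d_j - d_L)` for `j < L` and
`x_j = 1` otherwise, with `c = 2 / (φ_L - d_0 + 1)`: `φ_L` is the root of the quadratic that makes
the slack `σ x_i - (Q x)_i` of every row a sum of three nonnegative terms. All rows are tight
exactly when every vertex before `L` has outdegree `d_0` or `d_L`, every later vertex has
outdegree `d_L`, and every vertex sends an arc to each earlier vertex of outdegree larger than
`d_L`. So `q = φ_s` forces this configuration for `L = s`, while a regular digraph realises it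
for `L = 0` and the second equality case for `L = t`. -/

section CollatzWielandt

variable {ι : Type*} [Fintype ι]

theorem exists_forall_norm_le_div_mul {E : Type*} [NormedAddCommGroup E] {z : ι → E}
    (hz : z ≠ 0) {x : ι → ℝ} (hx : ∀ i, 0 < x i) :
    ∃ k, 0 < ‖z k‖ ∧ ∀ j, ‖z j‖ ≤ ‖z k‖ / x k * x j := by
  obtain ⟨i, hi⟩ := Function.ne_iff.mp hz
  obtain ⟨k, -, hk⟩ :=
    Finset.univ.exists_max_image (fun j => ‖z j‖ / x j) ⟨i, Finset.mem_univ i⟩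
  have hk' : ∀ j, ‖z j‖ / x j ≤ ‖z k‖ / x k := fun j => hk j (Finset.mem_univ j)
  refine ⟨k, ?_, fun j => (div_le_iff₀ (hx j)).mp (hk' j)⟩
  have := (div_pos (norm_pos_iff.mpr hi) (hx i)).trans_le (hk' i)
  exact (div_pos_iff_of_pos_right (hx k)).mp this

namespace Matrix

theorem mem_spectrum_iff_exists_mulVec_eq_smul {K : Type*} [Field K] [DecidableEq ι]
    {A : Matrix ι ι K} {μ : K} : μ ∈ spectrum K A ↔ ∃ z ≠ 0, A *ᵥ z = μ • z := by
  rw [← Matrix.spectrum_toLin', ← Module.End.hasEigenvalue_iff_mem_spectrum]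
  constructor
  · intro h
    obtain ⟨z, hz, hz0⟩ := h.exists_hasEigenvector
    exact ⟨z, hz0, by simpa using Module.End.mem_eigenspace_iff.mp hz⟩
  · rintro ⟨z, hz0, hz⟩
    exact Module.End.hasEigenvalue_of_hasEigenvector
      ⟨Module.End.mem_eigenspace_iff.mpr (by simpa using hz), hz0⟩

theorem norm_mul_norm_le_of_mulVec_eq_smul {M : Matrix ι ι ℝ} (hM : ∀ i j, 0 ≤ M i j)
    {μ : ℂ} {z : ι → ℂ} (hz : M.map ((↑) : ℝ → ℂ) *ᵥ z = μ • z) (i : ι) :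
    ‖μ‖ * ‖z i‖ ≤ ∑ j, M i j * ‖z j‖ :=
  calc ‖μ‖ * ‖z i‖ = ‖∑ j, (M i j : ℂ) * z j‖ := by
        rw [← norm_mul, ← smul_eq_mul, ← Pi.smul_apply, ← hz]; rfl
  _ ≤ ∑ j, ‖(M i j : ℂ) * z j‖ := norm_sum_le _ _
  _ = ∑ j, M i j * ‖z j‖ := by simp [abs_of_nonneg (hM i _)]

theorem sum_mul_le_mul_mulVec {M : Matrix ι ι ℝ} (hM : ∀ i j, 0 ≤ M i j) {u x : ι → ℝ}
    {m : ℝ} (hu : ∀ j, u j ≤ m * x j) (i : ι) : ∑ j, M i j * u j ≤ m * (M *ᵥ x) i := by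
  rw [Matrix.mulVec, dotProduct, Finset.mul_sum]
  exact Finset.sum_le_sum fun j _ =>
    (mul_le_mul_of_nonneg_left (hu j) (hM i j)).trans_eq (by ring)

theorem norm_le_of_mulVec_le [DecidableEq ι] {M : Matrix ι ι ℝ} (hM : ∀ i j, 0 ≤ M i j)
    {x : ι → ℝ} (hx : ∀ i, 0 < x i) {r : ℝ} (hMx : M *ᵥ x ≤ r • x) {μ : ℂ}
    (hμ : μ ∈ spectrum ℂ (M.map ((↑) : ℝ → ℂ))) : ‖μ‖ ≤ r := by
  obtain ⟨z, hz0, hz⟩ := mem_spectrum_iff_exists_mulVec_eq_smul.mp hμ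
  obtain ⟨k, hk, hmax⟩ := exists_forall_norm_le_div_mul hz0 hx
  refine le_of_mul_le_mul_right ?_ hk
  calc ‖μ‖ * ‖z k‖
      ≤ ∑ j, M k j * ‖z j‖ := norm_mul_norm_le_of_mulVec_eq_smul hM hz k
  _ ≤ ‖z k‖ / x k * (M *ᵥ x) k := sum_mul_le_mul_mulVec hM hmax k
  _ ≤ ‖z k‖ / x k * (r * x k) := by gcongr; exacts [(div_pos hk (hx k)).le, hMx k]
  _ = r * ‖z k‖ := by field_simp [(hx k).ne']

/-- The squeeze `r m x_i = r u_i ≤ ∑ M_ij u_j ≤ m (M x)_i ≤ r m x_i` is an equality. -/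
theorem mulVec_apply_eq_of_apply_eq_mul {M : Matrix ι ι ℝ} (hM : ∀ i j, 0 ≤ M i j)
    {x u : ι → ℝ} {r m : ℝ} (hm : 0 < m) (hMx : M *ᵥ x ≤ r • x)
    (hu : ∀ j, u j ≤ m * x j) (hsub : ∀ i, r * u i ≤ ∑ j, M i j * u j) {i : ι}
    (hi : u i = m * x i) :
    (M *ᵥ x) i = r * x i ∧ ∀ j, 0 < M i j → u j = m * x j := by
  have hup := sum_mul_le_mul_mulVec hM hu i
  have hrow : m * (M *ᵥ x) i ≤ m * (r * x i) := mul_le_mul_of_nonneg_left (hMx i) hm.le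
  have hlow := hsub i
  rw [hi] at hlow
  refine ⟨mul_left_cancel₀ hm.ne' (by linarith), fun j hj => ?_⟩
  have hterm : ∀ j ∈ Finset.univ, M i j * u j ≤ M i j * (m * x j) :=
    fun j _ => mul_le_mul_of_nonneg_left (hu j) (hM i j)
  have hsum : ∑ j, M i j * (m * x j) = m * (M *ᵥ x) i := by
    simp only [Matrix.mulVec, dotProduct, Finset.mul_sum]
    exact Finset.sum_congr rfl fun j _ => by ring
  have := (Finset.sum_eq_sum_iff_of_le hterm).mp (by linarith [Finset.sum_le_sum hterm]) j
    (Finset.mem_univ j)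
  exact mul_left_cancel₀ hj.ne' this

end Matrix

end CollatzWielandt

namespace SignlessDigraph

variable {n : ℕ}

section Radius

variable {M : Matrix (Fin n) (Fin n) ℝ}

theorem radius_le {x : Fin n → ℝ} (hM : ∀ i j, 0 ≤ M i j) (hx : ∀ i, 0 < x i) {r : ℝ}
    (hr : 0 ≤ r) (hMx : M *ᵥ x ≤ r • x) : radius M ≤ r :=
  Real.sSup_le (fun _ ⟨_, hμ, h⟩ => h ▸ norm_le_of_mulVec_le hM hx hMx hμ) hr

theorem finite_radius_set (M : Matrix (Fin n) (Fin n) ℝ) :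
    {r : ℝ | ∃ μ ∈ spectrum ℂ (M.map ((↑) : ℝ → ℂ)), r = ‖μ‖}.Finite := by
  convert (Matrix.finite_spectrum (M.map ((↑) : ℝ → ℂ))).image (‖·‖) using 1
  ext r
  simp [eq_comm]

theorem norm_le_radius {μ : ℂ} (hμ : μ ∈ spectrum ℂ (M.map ((↑) : ℝ → ℂ))) :
    ‖μ‖ ≤ radius M :=
  le_csSup (finite_radius_set M).bddAbove ⟨μ, hμ, rfl⟩

theorem le_radius_of_mulVec_eq_smul {x : Fin n → ℝ} (hx : x ≠ 0) {σ : ℝ}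
    (h : M *ᵥ x = σ • x) : σ ≤ radius M := by
  refine (le_abs_self σ).trans ?_
  rw [← Real.norm_eq_abs, ← Complex.norm_real]
  refine norm_le_radius (mem_spectrum_iff_exists_mulVec_eq_smul.mpr
    ⟨fun i => (x i : ℂ), fun h0 => hx (funext fun i => by simpa using congrFun h0 i), ?_⟩)
  funext i
  have := congrArg ((↑) : ℝ → ℂ) (congrFun h i)
  simpa [Matrix.mulVec, dotProduct] using this

theorem exists_norm_eq_radius [NeZero n] (M : Matrix (Fin n) (Fin n) ℝ) :
    ∃ μ ∈ spectrum ℂ (M.map ((↑) : ℝ → ℂ)), ‖μ‖ = radius M := by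
  obtain ⟨μ, hμ⟩ := spectrum.nonempty_of_isAlgClosed_of_finiteDimensional ℂ
    (M.map ((↑) : ℝ → ℂ))
  obtain ⟨ν, hν, h⟩ :=
    Set.Nonempty.csSup_mem (by exact ⟨‖μ‖, μ, hμ, rfl⟩) (finite_radius_set M)
  exact ⟨ν, hν, h.symm⟩

theorem mulVec_eq_smul_of_radius_eq [NeZero n] (hM : ∀ i j, 0 ≤ M i j)
    (hirr : ∀ i j, Relation.ReflTransGen (fun a b => 0 < M a b) i j) {x : Fin n → ℝ}
    (hx : ∀ i, 0 < x i) {r : ℝ} (hMx : M *ᵥ x ≤ r • x) (hr : radius M = r) :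
    M *ᵥ x = r • x := by
  obtain ⟨μ, hμ, hμr⟩ := exists_norm_eq_radius M
  obtain ⟨z, hz0, hz⟩ := mem_spectrum_iff_exists_mulVec_eq_smul.mp hμ
  obtain ⟨k, hk, hmax⟩ := exists_forall_norm_le_div_mul hz0 hx
  have hsub : ∀ i, r * ‖z i‖ ≤ ∑ j, M i j * ‖z j‖ := by
    rw [← hr, ← hμr]; exact norm_mul_norm_le_of_mulVec_eq_smul hM hz
  have htouch := fun i =>
    mulVec_apply_eq_of_apply_eq_mul hM (div_pos hk (hx k)) hMx hmax hsub (i := i)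
  have hall : ∀ i, ‖z i‖ = ‖z k‖ / x k * x i := fun i => by
    induction hirr k i with
    | refl => field_simp [(hx k).ne']
    | tail _ hab ih => exact (htouch _ ih).2 _ hab
  funext i
  exact (htouch i (hall i)).1

end Radius

section SignlessLaplacian

variable {W : Fin n → Fin n → ℕ}

theorem Qmat_nonneg (W : Fin n → Fin n → ℕ) (i j : Fin n) : 0 ≤ Qmat W i j := by
  simp only [Qmat, adjMat, Matrix.add_apply, Matrix.diagonal_apply]
  positivity

theorem Qmat_pos_of_ne_zero {i j : Fin n} (h : W i j ≠ 0) : 0 < Qmat W i j := by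
  simp only [Qmat, adjMat, Matrix.add_apply, Matrix.diagonal_apply]
  have : (0 : ℝ) < W i j := by exact_mod_cast Nat.pos_of_ne_zero h
  split_ifs <;> positivity

theorem StronglyConnected.reflTransGen_Qmat_pos (hW : StronglyConnected W) (i j : Fin n) :
    Relation.ReflTransGen (fun a b => 0 < Qmat W a b) i j :=
  Relation.ReflTransGen.mono (fun _ _ => Qmat_pos_of_ne_zero) i j (hW i j)

theorem Qmat_mulVec_apply (x : Fin n → ℝ) (i : Fin n) :
    (Qmat W *ᵥ x) i = outdeg W i * x i + ∑ j, (W i j : ℝ) * x j := by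
  rw [Qmat, Matrix.add_mulVec, Pi.add_apply, Matrix.mulVec_diagonal]
  rfl

theorem indeg_eq_sub_one_iff (hW : Simple W) (j : Fin n) :
    indeg W j = n - 1 ↔ ∀ i, i ≠ j → W i j = 1 := by
  have hsplit : indeg W j = ∑ i ∈ Finset.univ.erase j, W i j := by
    rw [indeg, ← Finset.add_sum_erase _ _ (Finset.mem_univ j), hW.1 j, zero_add]
  have hcard : n - 1 = ∑ _i ∈ Finset.univ.erase j, 1 := by simp
  rw [hsplit, hcard, Finset.sum_eq_sum_iff_of_le fun i _ => hW.2 i j]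
  simp

end SignlessLaplacian

theorem phi_quadratic_root {D₀ D S σ : ℝ} (hD : 0 ≤ D) (hS : D₀ - D ≤ S)
    (hS₀ : 0 ≤ S)
    (hσ : σ = (D₀ + 2 * D - 1 + Real.sqrt ((2 * D - D₀ + 1) ^ 2 + 8 * S)) / 2) :
    0 < σ - D₀ + 1 ∧ (σ - 2 * D) * (σ - D₀ + 1) = 2 * S := by
  set a := 2 * D - D₀ + 1
  have hr := Real.sq_sqrt (by positivity : 0 ≤ a ^ 2 + 8 * S)
  have hr₀ := Real.sqrt_nonneg (a ^ 2 + 8 * S)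
  subst hσ
  refine ⟨?_, by linear_combination hr / 4⟩
  by_cases ha : 0 < a
  · linarith
  · nlinarith

noncomputable section TestVector

variable {W : Fin n → Fin n → ℕ} (L : Fin n)

variable (W) in
def excess (j : Fin n) : ℝ := if j < L then (outdeg W j : ℝ) - outdeg W L else 0

variable (W) in
def missingExcess (i : Fin n) : ℝ :=
  ∑ j ∈ Finset.univ.erase i, (1 - (W i j : ℝ)) * excess W L j

theorem sum_excess :
    ∑ j, excess W L j = ∑ i ∈ Finset.Iio L, ((outdeg W i : ℝ) - (outdeg W L : ℝ)) := by
  simp [excess, Finset.sum_ite, Finset.filter_gt_eq_Iio]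

theorem excess_nonneg (hmono : Antitone (outdeg W)) (j : Fin n) : 0 ≤ excess W L j := by
  unfold excess
  split_ifs with h
  · exact sub_nonneg.mpr (by exact_mod_cast hmono h.le)
  · rfl

theorem sum_excess_sub_sum_mul_excess (hW : Simple W) (i : Fin n) :
    ∑ j, excess W L j - ∑ j, (W i j : ℝ) * excess W L j =
      excess W L i + missingExcess W L i := by
  rw [← Finset.sum_sub_distrib, ← Finset.add_sum_erase _ _ (Finset.mem_univ i), hW.1 i,
    missingExcess]
  simp only [Nat.cast_zero, zero_mul, sub_zero, one_sub_mul]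

theorem missingExcess_nonneg (hW : Simple W) (hmono : Antitone (outdeg W)) (i : Fin n) :
    0 ≤ missingExcess W L i :=
  Finset.sum_nonneg fun j _ => mul_nonneg (sub_nonneg.mpr (by exact_mod_cast hW.2 i j))
    (excess_nonneg L hmono j)

theorem missingExcess_eq_zero_iff (hW : Simple W) (hmono : Antitone (outdeg W)) (i : Fin n) :
    missingExcess W L i = 0 ↔
      ∀ j, j < L → outdeg W L < outdeg W j → i ≠ j → W i j = 1 := by
  rw [missingExcess, Finset.sum_eq_zero_iff_of_nonneg fun j _ => mul_nonneg
    (sub_nonneg.mpr (by exact_mod_cast hW.2 i j)) (excess_nonneg L hmono j)]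
  refine forall_congr' fun j => ?_
  have hle : j < L → outdeg W L ≤ outdeg W j := fun h => hmono h.le
  simp only [Finset.mem_erase, Finset.mem_univ, and_true, excess, mul_eq_zero, sub_eq_zero,
    ne_comm (a := i)]
  split_ifs with h
  · rw [sub_eq_zero, Nat.cast_inj, eq_comm (a := (1 : ℝ)), Nat.cast_eq_one]
    constructor
    · exact fun H _ hlt hne => (H hne).resolve_right hlt.ne'
    · intro H hne
      rcases (hle h).lt_or_eq with hlt | heq
      exacts [Or.inl (H h hlt hne), Or.inr heq.symm]
  · simp [h]

theorem sub_add_excess_nonneg (hmono : Antitone (outdeg W)) (i : Fin n) :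
    0 ≤ (outdeg W L : ℝ) - outdeg W i + excess W L i := by
  unfold excess
  split_ifs with h
  · simp
  · simpa using (show (outdeg W i : ℝ) ≤ outdeg W L by exact_mod_cast hmono (not_lt.mp h))

theorem sub_add_excess_eq_zero_iff (i : Fin n) :
    (outdeg W L : ℝ) - outdeg W i + excess W L i = 0 ↔
      (L ≤ i → outdeg W i = outdeg W L) := by
  unfold excess
  split_ifs with h
  · simp [not_le.mpr h]
  · rw [add_zero, sub_eq_zero, Nat.cast_inj]
    simp [not_lt.mp h, eq_comm]

variable [NeZero n]

variable (W) in
def phiVal : ℝ :=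
  ((outdeg W 0 : ℝ) + 2 * (outdeg W L : ℝ) - 1 +
    Real.sqrt ((2 * (outdeg W L : ℝ) - (outdeg W 0 : ℝ) + 1) ^ 2 + 8 * ∑ j, excess W L j)) / 2

variable (W) in
def slope : ℝ := 2 / (phiVal W L - outdeg W 0 + 1)

variable (W) in
def testVec (j : Fin n) : ℝ := 1 + slope W L * excess W L j

variable (W) in
/-- The combinatorial condition under which `testVec W L` is an eigenvector for `phiVal W L`. -/
def Extremal : Prop :=
  ∀ i, (i < L → outdeg W i = outdeg W 0 ∨ outdeg W i = outdeg W L) ∧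
    (L ≤ i → outdeg W i = outdeg W L) ∧
    ∀ j, j < L → outdeg W L < outdeg W j → i ≠ j → W i j = 1

theorem phiVal_eq_ite : phiVal W L = if (L : ℕ) = 0 then 2 * (outdeg W 0 : ℝ)
    else ((outdeg W 0 : ℝ) + 2 * (outdeg W L : ℝ) - 1 +
      Real.sqrt ((2 * (outdeg W L : ℝ) - (outdeg W 0 : ℝ) + 1) ^ 2 +
        8 * ∑ i ∈ Finset.Iio L, ((outdeg W i : ℝ) - (outdeg W L : ℝ)))) / 2 := by
  split_ifs with h
  · obtain rfl : L = 0 := Fin.ext h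
    simp only [phiVal, excess, Fin.not_lt_zero, if_false, Finset.sum_const_zero, mul_zero,
      add_zero]
    rw [show (2 * (outdeg W 0 : ℝ) - outdeg W 0 + 1) = outdeg W 0 + 1 by ring,
      Real.sqrt_sq (by positivity)]
    ring
  · rw [phiVal, sum_excess]

theorem excess_mul_sub_nonneg (hmono : Antitone (outdeg W)) (i : Fin n) :
    0 ≤ excess W L i * (outdeg W 0 - outdeg W i) :=
  mul_nonneg (excess_nonneg L hmono i) (sub_nonneg.mpr (by exact_mod_cast hmono (Fin.zero_le i)))

theorem excess_mul_sub_eq_zero_iff (i : Fin n) :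
    excess W L i * (outdeg W 0 - outdeg W i) = 0 ↔
      (i < L → outdeg W i = outdeg W 0 ∨ outdeg W i = outdeg W L) := by
  unfold excess
  split_ifs with h
  · simp only [h, mul_eq_zero, sub_eq_zero, Nat.cast_inj, forall_const]
    tauto
  · simp [h]

theorem phiVal_root (hmono : Antitone (outdeg W)) :
    0 < phiVal W L - outdeg W 0 + 1 ∧
      (phiVal W L - 2 * outdeg W L) * (phiVal W L - outdeg W 0 + 1) = 2 * ∑ j, excess W L j := by
  refine phi_quadratic_root (Nat.cast_nonneg _) ?_
    (Finset.sum_nonneg fun j _ => excess_nonneg L hmono j) rfl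
  rcases eq_or_ne L 0 with rfl | hL
  · simpa using Finset.sum_nonneg fun j _ => excess_nonneg 0 hmono j
  · have h0 : excess W L 0 = outdeg W 0 - outdeg W L := if_pos (Fin.pos_iff_ne_zero.mpr hL)
    exact h0 ▸ Finset.single_le_sum (fun j _ => excess_nonneg L hmono j) (Finset.mem_univ 0)

theorem slope_pos (hmono : Antitone (outdeg W)) : 0 < slope W L :=
  div_pos two_pos (phiVal_root L hmono).1

theorem slope_mul (hmono : Antitone (outdeg W)) : slope W L * (phiVal W L - outdeg W 0 + 1) = 2 :=
  div_mul_cancel₀ _ (phiVal_root L hmono).1.ne'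

theorem phiVal_sub_eq_slope_mul (hmono : Antitone (outdeg W)) :
    phiVal W L - 2 * outdeg W L = slope W L * ∑ j, excess W L j := by
  have h := phiVal_root L hmono
  refine mul_right_cancel₀ h.1.ne' ?_
  rw [h.2, mul_right_comm, slope_mul L hmono, mul_comm]

theorem phiVal_nonneg (hmono : Antitone (outdeg W)) : 0 ≤ phiVal W L := by
  have : 0 ≤ slope W L * ∑ j, excess W L j :=
    mul_nonneg (slope_pos L hmono).le (Finset.sum_nonneg fun j _ => excess_nonneg L hmono j)
  linarith [phiVal_sub_eq_slope_mul L hmono, (Nat.cast_nonneg (outdeg W L) : (0 : ℝ) ≤ _)]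

theorem testVec_pos (hmono : Antitone (outdeg W)) (j : Fin n) : 0 < testVec W L j := by
  have := mul_nonneg (slope_pos L hmono).le (excess_nonneg L hmono j)
  unfold testVec; linarith

theorem testVec_ne_zero (hmono : Antitone (outdeg W)) : testVec W L ≠ 0 :=
  fun h => (testVec_pos L hmono 0).ne' (congrFun h 0)

theorem Qmat_mulVec_testVec_apply (i : Fin n) :
    (Qmat W *ᵥ testVec W L) i = outdeg W i * testVec W L i + outdeg W i +
      slope W L * ∑ j, (W i j : ℝ) * excess W L j := by
  simp only [Qmat_mulVec_apply, testVec, mul_add, mul_one, Finset.sum_add_distrib,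
    Finset.mul_sum, outdeg, Nat.cast_sum]
  ring_nf

/-- The slack of row `i` in `Q x ≤ φ_L x` splits into three nonnegative parts. -/
theorem phiVal_mul_testVec_sub_Qmat_mulVec (hW : Simple W) (hmono : Antitone (outdeg W))
    (i : Fin n) :
    phiVal W L * testVec W L i - (Qmat W *ᵥ testVec W L) i =
      slope W L * (excess W L i * (outdeg W 0 - outdeg W i)) +
        2 * ((outdeg W L : ℝ) - outdeg W i + excess W L i) + slope W L * missingExcess W L i := by
  rw [Qmat_mulVec_testVec_apply, testVec]
  linear_combination phiVal_sub_eq_slope_mul L hmono +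
    slope W L * sum_excess_sub_sum_mul_excess L hW i + excess W L i * slope_mul L hmono

theorem Qmat_mulVec_testVec_le (hW : Simple W) (hmono : Antitone (outdeg W)) :
    Qmat W *ᵥ testVec W L ≤ phiVal W L • testVec W L := fun i => by
  have hc := (slope_pos L hmono).le
  have := phiVal_mul_testVec_sub_Qmat_mulVec L hW hmono i
  have := mul_nonneg hc (excess_mul_sub_nonneg L hmono i)
  have := sub_add_excess_nonneg L hmono i
  have := mul_nonneg hc (missingExcess_nonneg L hW hmono i)
  simp only [Pi.smul_apply, smul_eq_mul]
  linarith

theorem Qmat_mulVec_testVec_eq_iff (hW : Simple W) (hmono : Antitone (outdeg W)) :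
    Qmat W *ᵥ testVec W L = phiVal W L • testVec W L ↔ Extremal W L := by
  have hc := slope_pos L hmono
  refine funext_iff.trans (forall_congr' fun i => ?_)
  have h₁ := mul_nonneg hc.le (excess_mul_sub_nonneg L hmono i)
  have h₂ := mul_nonneg zero_le_two (sub_add_excess_nonneg L hmono i)
  have h₃ := mul_nonneg hc.le (missingExcess_nonneg L hW hmono i)
  rw [Pi.smul_apply, smul_eq_mul, eq_comm, ← sub_eq_zero,
    phiVal_mul_testVec_sub_Qmat_mulVec L hW hmono i,
    add_eq_zero_iff_of_nonneg (add_nonneg h₁ h₂) h₃, add_eq_zero_iff_of_nonneg h₁ h₂,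
    mul_eq_zero_iff_left hc.ne', mul_eq_zero_iff_left two_ne_zero, mul_eq_zero_iff_left hc.ne',
    excess_mul_sub_eq_zero_iff, sub_add_excess_eq_zero_iff, missingExcess_eq_zero_iff L hW hmono,
    and_assoc]

end TestVector

section Equality

variable {W : Fin n → Fin n → ℕ} [NeZero n]

theorem extremal_zero_of_forall_outdeg_eq (h : ∀ i j : Fin n, outdeg W i = outdeg W j) :
    Extremal W 0 :=
  fun i => ⟨fun hi => absurd hi (Fin.not_lt_zero i), fun _ => h i 0,
    fun j hj => absurd hj (Fin.not_lt_zero j)⟩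

theorem extremal_of_indeg_eq (hW : Simple W) {t : ℕ} (ht : t < n)
    (htop : ∀ i : Fin n, (i : ℕ) < t → outdeg W i = outdeg W 0)
    (hbot : ∀ i j : Fin n, t ≤ (i : ℕ) → t ≤ (j : ℕ) → outdeg W i = outdeg W j)
    (hindeg : ∀ i : Fin n, (i : ℕ) < t → indeg W i = n - 1) :
    Extremal W ⟨t, ht⟩ :=
  fun i => ⟨fun hi => Or.inl (htop i hi), fun hi => hbot i _ hi le_rfl,
    fun j hj _ hij => (indeg_eq_sub_one_iff hW j).mp (hindeg j hj) i hij⟩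

theorem Extremal.exists_top_block (hW : Simple W) (hmono : Antitone (outdeg W)) {s : Fin n}
    (h : Extremal W s) (hreg : ¬ ∀ i : Fin n, outdeg W i = outdeg W 0) :
    ∃ t : ℕ, 1 ≤ t ∧ t ≤ (s : ℕ) ∧
      (∀ i : Fin n, (i : ℕ) < t → outdeg W i = outdeg W 0) ∧
      (∀ i : Fin n, t ≤ (i : ℕ) → outdeg W i < outdeg W 0) ∧
      (∀ i j : Fin n, t ≤ (i : ℕ) → t ≤ (j : ℕ) → outdeg W i = outdeg W j) ∧
      (∀ i : Fin n, (i : ℕ) < t → indeg W i = n - 1) := by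
  classical
  have hex : ∃ t, ∃ ht : t < n, outdeg W ⟨t, ht⟩ ≠ outdeg W 0 :=
    let ⟨i, hi⟩ := not_forall.mp hreg
    ⟨i, i.2, hi⟩
  obtain ⟨ht, hT⟩ := Nat.find_spec hex
  set t := Nat.find hex
  set T : Fin n := ⟨t, ht⟩
  have htop : ∀ i : Fin n, (i : ℕ) < t → outdeg W i = outdeg W 0 :=
    fun i hi => not_not.mp fun hne => Nat.find_min hex hi ⟨i.2, hne⟩
  have hTlt : outdeg W T < outdeg W 0 := (hmono (Fin.zero_le T)).lt_of_ne hT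
  have hbelow : ∀ i : Fin n, t ≤ (i : ℕ) → outdeg W i ≤ outdeg W T := fun i hi => hmono hi
  have hts : t ≤ (s : ℕ) := by
    by_contra! hst
    exact hT (((h T).2.1 hst.le).trans (htop s hst))
  have hbot : ∀ i : Fin n, t ≤ (i : ℕ) → outdeg W i = outdeg W s := by
    intro i hi
    rcases lt_or_ge i s with his | hsi
    · exact ((h i).1 his).resolve_left ((hbelow i hi).trans_lt hTlt).ne
    · exact (h i).2.1 hsi
  have hst : outdeg W s < outdeg W 0 := hbot T le_rfl ▸ hTlt
  refine ⟨t, Nat.one_le_iff_ne_zero.mpr fun h0 => hT (congrArg (outdeg W) (Fin.ext h0)), hts,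
    htop, fun i hi => (hbelow i hi).trans_lt hTlt,
    fun i j hi hj => (hbot i hi).trans (hbot j hj).symm,
    fun i hi => (indeg_eq_sub_one_iff hW i).mpr fun k hki =>
      (h k).2.2 i (Fin.lt_def.mpr (hi.trans_le hts)) (htop i hi ▸ hst) hki⟩

end Equality

/-- Vertices are `0`-indexed: vertex `0` has the largest outdegree, `φ` at index `0` is `2d_1^+`,
and the paper's index `l ∈ {1,…,n}` corresponds to the index `l-1 : Fin n`. -/
theorem q_le_phi {n : ℕ} (hn : 2 ≤ n) (W : Fin n → Fin n → ℕ) (hW : Simple W)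
    (hmono : ∀ i j : Fin n, i ≤ j → outdeg W j ≤ outdeg W i)
    (phi : Fin n → ℝ)
    (hphi : ∀ l : Fin n, phi l =
      if (l : ℕ) = 0 then 2 * (outdeg W ⟨0, by omega⟩ : ℝ)
      else ((outdeg W ⟨0, by omega⟩ : ℝ) + 2 * (outdeg W l : ℝ) - 1 +
        Real.sqrt ((2 * (outdeg W l : ℝ) - (outdeg W ⟨0, by omega⟩ : ℝ) + 1) ^ 2 +
          8 * ∑ i ∈ Finset.Iio l, ((outdeg W i : ℝ) - (outdeg W l : ℝ)))) / 2)
    (s : Fin n) (hs : ∀ l : Fin n, phi s ≤ phi l) :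
    q W ≤ phi s ∧
    (StronglyConnected W →
      (q W = phi s ↔
        ((∀ i j : Fin n, outdeg W i = outdeg W j) ∨
          ∃ t : ℕ, 1 ≤ t ∧ t ≤ (s : ℕ) ∧
            (∀ i : Fin n, (i : ℕ) < t → outdeg W i = outdeg W ⟨0, by omega⟩) ∧
            (∀ i : Fin n, t ≤ (i : ℕ) → outdeg W i < outdeg W ⟨0, by omega⟩) ∧
            (∀ i j : Fin n, t ≤ (i : ℕ) → t ≤ (j : ℕ) → outdeg W i = outdeg W j) ∧
            (∀ i : Fin n, (i : ℕ) < t → indeg W i = n - 1)))) := by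
  have : NeZero n := ⟨by omega⟩
  have hphi' : ∀ l, phi l = phiVal W l := fun l => (hphi l).trans (phiVal_eq_ite l).symm
  have hle : ∀ L, Qmat W *ᵥ testVec W L ≤ phiVal W L • testVec W L :=
    fun L => Qmat_mulVec_testVec_le L hW hmono
  have hbound : q W ≤ phi s := hphi' s ▸
    radius_le (Qmat_nonneg W) (testVec_pos s hmono) (phiVal_nonneg s hmono) (hle s)
  refine ⟨hbound, fun hSC => ⟨fun hq => ?_, fun h => le_antisymm hbound ?_⟩⟩
  · have hext := (Qmat_mulVec_testVec_eq_iff s hW hmono).mp <|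
      mulVec_eq_smul_of_radius_eq (Qmat_nonneg W) hSC.reflTransGen_Qmat_pos
        (testVec_pos s hmono) (hle s) (hq.trans (hphi' s))
    by_cases hreg : ∀ i : Fin n, outdeg W i = outdeg W 0
    · exact Or.inl fun i j => (hreg i).trans (hreg j).symm
    · exact Or.inr (hext.exists_top_block hW hmono hreg)
  · obtain ⟨L, hL⟩ : ∃ L, Extremal W L := by
      rcases h with hreg | ⟨t, -, hts, htop, -, hbot, hindeg⟩
      exacts [⟨0, extremal_zero_of_forall_outdeg_eq hreg⟩,
        ⟨_, extremal_of_indeg_eq hW (hts.trans_lt s.2) htop hbot hindeg⟩]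
    calc phi s ≤ phi L := hs L
    _ = phiVal W L := hphi' L
    _ ≤ q W := le_radius_of_mulVec_eq_smul (testVec_ne_zero L hmono)
      ((Qmat_mulVec_testVec_eq_iff L hW hmono).mpr hL)

end SignlessDigraph
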